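/- In any decomposition of the Example 2 box of the form P(ab|xy) = Σ_{λ=0}^{3} p(λ)P(a|x,λ)P(b|y,ρ_λ) with p(λ) > 0 for all λ, P(a|x,λ) equal to the four distinct deterministic Alice boxes P_D^{00},P_D^{01},P_D^{10},P_D^{11} (at λ = 0,1,2,3 respectively), and each P(b|y,ρ_λ) a single-party distribution with entries in (0,1), the constraints p(11|01) = 0 and p(11|10) = 0 force either p(1) = 0 (contradicting p(1) > 0) or P(0|y,ρ₁) = 1 for both y, which has no qubit realization with two mutually unbiased projective measurements. Hence no such dimension-4 decomposition exists. -/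

import Mathlib

open Finset

/-- The box of Example 2. -/
noncomputable def PEx2 (a b x y : Fin 2) : ℝ :=
  if x = y then (if a = 0 ∧ b = 0 then 5 / 8 else 1 / 8)
  else (if a = 0 ∧ b = 0 then 1 / 2 else if a = 1 ∧ b = 1 then 0 else 1 / 4)

/-- Single-party deterministic box P_D^{αβ}. -/
def PD (α β : Fin 2) (a x : Fin 2) : ℝ :=
  if a = α * x + β then 1 else 0

/-- Alice's four distinct deterministic boxes, indexed by λ = 0,1,2,3:
P_D^{00}, P_D^{01}, P_D^{10}, P_D^{11}. -/
def PAlice : Fin 4 → Fin 2 → Fin 2 → ℝ := ![PD 0 0, PD 0 1, PD 1 0, PD 1 1]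

/-!
The entry p(11|01) of the box vanishes. In the decomposition it is a sum of nonnegative terms,
one of which is p(1) · P_D^{01}(1|0) · P(1|1,ρ₁) = p(1) · P(1|1,ρ₁). Its vanishing would force
p(1) = 0 or P(0|1,ρ₁) = 1, both excluded by the strict bounds on the weights and on Bob's
distributions.
-/

lemma PD_nonneg (α β a x : Fin 2) : 0 ≤ PD α β a x := by
  unfold PD
  split_ifs <;> norm_num

lemma PD_zero_self (β x : Fin 2) : PD 0 β β x = 1 := by
  simp [PD]

lemma PAlice_nonneg (lam : Fin 4) (a x : Fin 2) : 0 ≤ PAlice lam a x := by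
  fin_cases lam <;> exact PD_nonneg _ _ _ _

lemma PEx2_one_one_zero_one : PEx2 1 1 0 1 = 0 := by
  simp [PEx2]

/-- The Example 2 box admits no dimension-4 LHV-LHS decomposition with all four
distinct deterministic Alice boxes occurring with positive weight and Bob
distributions with all entries strictly between 0 and 1. -/
theorem ex2_no_dim4_decomposition :
    ¬ ∃ (p : Fin 4 → ℝ) (Q : Fin 4 → Fin 2 → Fin 2 → ℝ),
        (∀ lam, 0 < p lam) ∧ (∑ lam, p lam = 1) ∧
        (∀ lam y b, 0 < Q lam y b ∧ Q lam y b < 1) ∧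
        (∀ lam y, ∑ b : Fin 2, Q lam y b = 1) ∧
        (∀ a b x y : Fin 2,
          PEx2 a b x y = ∑ lam, p lam * PAlice lam a x * Q lam y b) := by
  rintro ⟨p, Q, hp, -, hQ, -, hPQ⟩
  have hsum : ∑ lam, p lam * PAlice lam 1 0 * Q lam 1 1 = 0 := by
    rw [← hPQ, PEx2_one_one_zero_one]
  have hterm_nonneg : ∀ lam ∈ univ, 0 ≤ p lam * PAlice lam 1 0 * Q lam 1 1 := fun lam _ =>
    mul_nonneg (mul_nonneg (hp lam).le (PAlice_nonneg lam 1 0)) (hQ lam 1 1).1.le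
  have hterm_one := (sum_eq_zero_iff_of_nonneg hterm_nonneg).1 hsum 1 (mem_univ 1)
  have hPAlice_one : PAlice 1 1 0 = 1 := PD_zero_self 1 0
  rw [hPAlice_one, mul_one] at hterm_one
  exact (mul_pos (hp 1) (hQ 1 1 1).1).ne' hterm_one
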